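/- The complement of the AND product is the OR product of the complements: (f ⋀ g)^c = f^c ⋁ g^c, as neutrosophic soft sets over the parameter set E × E. -/

import Mathlib

/-- A neutrosophic soft set over universe `X` with parameter set `E`:
each pair `(e, x)` gets a truth, indeterminacy and falsity degree in `[0,1]`. -/
structure NSSet (X E : Type*) where
  T : E → X → unitInterval
  I : E → X → unitInterval
  F : E → X → unitInterval

namespace NSSet

variable {X E : Type*}

/-- Neutrosophic soft subset: `T_f ≤ T_g`, `I_f ≥ I_g`, `F_f ≥ F_g` pointwise. -/
noncomputable def Subset (f g : NSSet X E) : Prop :=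
  ∀ e x, f.T e x ≤ g.T e x ∧ g.I e x ≤ f.I e x ∧ g.F e x ≤ f.F e x

/-- The null ns-set `Φ̃`: `(0,1,1)` everywhere. -/
noncomputable def nullNS : NSSet X E := ⟨fun _ _ => 0, fun _ _ => 1, fun _ _ => 1⟩

/-- The universal ns-set `X̃`: `(1,0,0)` everywhere. -/
noncomputable def univNS : NSSet X E := ⟨fun _ _ => 1, fun _ _ => 0, fun _ _ => 0⟩

/-- Union: `(max, min, min)` componentwise. -/
noncomputable def union (f g : NSSet X E) : NSSet X E :=
  ⟨fun e x => f.T e x ⊔ g.T e x, fun e x => f.I e x ⊓ g.I e x,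
   fun e x => f.F e x ⊓ g.F e x⟩

/-- Intersection: `(min, max, max)` componentwise. -/
noncomputable def inter (f g : NSSet X E) : NSSet X E :=
  ⟨fun e x => f.T e x ⊓ g.T e x, fun e x => f.I e x ⊔ g.I e x,
   fun e x => f.F e x ⊔ g.F e x⟩

/-- Complement: `(F, 1 - I, T)`. -/
noncomputable def compl (f : NSSet X E) : NSSet X E :=
  ⟨f.F, fun e x => unitInterval.symm (f.I e x), f.T⟩

/-- OR product over `E × E`: `(max, min, min)`. -/
noncomputable def orProd (f g : NSSet X E) : NSSet X (E × E) :=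
  ⟨fun p x => f.T p.1 x ⊔ g.T p.2 x, fun p x => f.I p.1 x ⊓ g.I p.2 x,
   fun p x => f.F p.1 x ⊓ g.F p.2 x⟩

/-- AND product over `E × E`: `(min, max, max)`. -/
noncomputable def andProd (f g : NSSet X E) : NSSet X (E × E) :=
  ⟨fun p x => f.T p.1 x ⊓ g.T p.2 x, fun p x => f.I p.1 x ⊔ g.I p.2 x,
   fun p x => f.F p.1 x ⊔ g.F p.2 x⟩

end NSSet

open NSSet

lemma unitInterval.symm_sup (a b : unitInterval) :
    unitInterval.symm (a ⊔ b) = unitInterval.symm a ⊓ unitInterval.symm b :=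
  Antitone.map_max fun _ _ h => unitInterval.symm_le_symm.2 h

theorem andProd_compl (X E : Type*) (f g : NSSet X E) :
    (f.andProd g).compl = f.compl.orProd g.compl := by
  simp only [andProd, NSSet.compl, orProd, unitInterval.symm_sup]
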